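/- Fix u,w ∈ U with s symmetric-wedge common neighbors and a asymmetric-wedge common neighbors. The number of balanced (2,k)-bicliques with U-side {u,w} equals C(s,k) + C(a,k) for any k ≥ 2. -/

import Mathlib

namespace Finset

variable {α : Type*} (s : Finset α) (p : α → Prop) [DecidablePred p]

theorem filter_powersetCard_forall_mem (k : ℕ) :
    (s.powersetCard k).filter (fun S => ∀ v ∈ S, p v) = (s.filter p).powersetCard k := by
  ext S
  simp only [mem_filter, mem_powersetCard, subset_iff]
  grind

theorem disjoint_powersetCard_filter_filter_not {k : ℕ} (hk : k ≠ 0) :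
    Disjoint ((s.filter p).powersetCard k) ((s.filter (¬ p ·)).powersetCard k) := by
  refine disjoint_left.mpr fun S hp hnp => ?_
  rw [mem_powersetCard] at hp hnp
  obtain ⟨v, hv⟩ := card_pos.mp (Nat.pos_of_ne_zero (hp.2.trans_ne hk))
  exact (mem_filter.mp (hnp.1 hv)).2 (mem_filter.mp (hp.1 hv)).2

theorem card_filter_powersetCard_forall_or_forall_not {k : ℕ} (hk : k ≠ 0) :
    #((s.powersetCard k).filter (fun S => (∀ v ∈ S, p v) ∨ ∀ v ∈ S, ¬ p v))
      = (#(s.filter p)).choose k + (#(s.filter (¬ p ·))).choose k := by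
  classical
  rw [filter_or, filter_powersetCard_forall_mem, filter_powersetCard_forall_mem,
    card_union_of_disjoint (disjoint_powersetCard_filter_filter_not s p hk),
    card_powersetCard, card_powersetCard]

end Finset

theorem balanced_biclique_count_general {V : Type*}
    (N : Finset V) (su sw : V → ℤ) (k : ℕ) (hk : 2 ≤ k) :
    ((N.powersetCard k).filter
        (fun S => (∀ v ∈ S, su v = sw v) ∨ (∀ v ∈ S, su v ≠ sw v))).card
      = (N.filter (fun v => su v = sw v)).card.choose k
        + (N.filter (fun v => su v ≠ sw v)).card.choose k :=
  N.card_filter_powersetCard_forall_or_forall_not (fun v => su v = sw v) (by omega)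

/-- With s symmetric-wedge and a asymmetric-wedge common neighbors of u,w,
the number of balanced (2,k)-bicliques with U-side {u,w} is C(s,k)+C(a,k),
for any k ≥ 2. -/
theorem balanced_biclique_count {V : Type*} [DecidableEq V]
    (N : Finset V) (su sw : V → ℤ) (k : ℕ) (hk : 2 ≤ k)
    (h : ∀ v ∈ N, (su v = 1 ∨ su v = -1) ∧ (sw v = 1 ∨ sw v = -1)) :
    ((N.powersetCard k).filter
        (fun S => (∀ v ∈ S, su v = sw v) ∨ (∀ v ∈ S, su v ≠ sw v))).card
      = (N.filter (fun v => su v = sw v)).card.choose k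
        + (N.filter (fun v => su v ≠ sw v)).card.choose k :=
  balanced_biclique_count_general N su sw k hk
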